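/- arXiv:math/0511329 — 3 statements merged into one kernel-verified Lean document; each statement's English description precedes it below -/
import Mathlib

section
/- Let Q = [0,a] × [0,a] ⊂ ℝ², let 0 < γ < 1, and let u : Q → ℝ be Lipschitz. Suppose there is a measurable set P ⊆ [0,a] with one-dimensional Lebesgue measure at least γ·a such that for every t ∈ P there exists x₁ ∈ [0,a] with u(x₁, t) = 0. Then ∫_Q |u|² dx ≤ C(γ) a² ∫_Q |∇u|² dx, where C(γ) depends only on γ (one may take C(γ) = 2/γ + 2). -/
open MeasureTheory

section PoincareAux

open Set Filter Topology intervalIntegral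

/-- Elementary Cauchy–Schwarz for set integrals via `∫ (f - m)² ≥ 0`. -/
lemma sq_setIntegral_le {f : ℝ → ℝ} {s : Set ℝ} {c : ℝ} (hc : 0 < c)
    (hμ : (volume s).toReal = c)
    (hf : IntegrableOn f s) (hf2 : IntegrableOn (fun x => f x ^ 2) s) :
    (∫ x in s, f x) ^ 2 ≤ c * ∫ x in s, f x ^ 2 := by
  have hfin : volume s ≠ ⊤ := by
    intro h; rw [h] at hμ; simp at hμ; linarith
  set m := (∫ x in s, f x) / c with hm
  have h0 : (0:ℝ) ≤ ∫ x in s, (f x - m) ^ 2 :=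
    integral_nonneg fun x => sq_nonneg _
  have hconst : IntegrableOn (fun _ : ℝ => m ^ 2) s :=
    integrableOn_const hfin
  have hmul : IntegrableOn (fun x => (2 * m) * f x) s := hf.const_mul _
  have hexp : ∫ x in s, (f x - m) ^ 2
      = (∫ x in s, f x ^ 2) - (2 * m) * (∫ x in s, f x) + m ^ 2 * c := by
    have : ∀ x, (f x - m) ^ 2 = (f x ^ 2 - (2 * m) * f x) + m ^ 2 := by
      intro x; ring
    simp_rw [this]
    have hsub : IntegrableOn (fun x => f x ^ 2 - 2 * m * f x) s := hf2.sub hmul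
    rw [integral_add hsub hconst, integral_sub hf2 hmul,
      MeasureTheory.integral_const_mul, setIntegral_const, smul_eq_mul, measureReal_def, hμ]
    ring
  rw [hexp] at h0
  have hS : (∫ x in s, f x) = m * c := by
    rw [hm]; field_simp
  rw [hS] at h0 ⊢
  nlinarith [sq_nonneg m, hc]

/-- The sequence `b + 1/(n+1)` tends to `b` within `≠ b`. -/
lemma tendsto_seq_nhdsNE (b : ℝ) :
    Tendsto (fun n : ℕ => b + 1 / ((n : ℝ) + 1)) atTop (𝓝[≠] b) := by
  apply tendsto_nhdsWithin_of_tendsto_nhds_of_eventually_within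
  · have : Tendsto (fun n : ℕ => 1 / ((n : ℝ) + 1)) atTop (𝓝 0) :=
      tendsto_one_div_add_atTop_nhds_zero_nat
    simpa using tendsto_const_nhds.add this
  · filter_upwards with n
    have : 0 < 1 / ((n : ℝ) + 1) := by positivity
    simp only [mem_compl_iff, mem_singleton_iff]
    intro h
    nlinarith [h]

/-- For continuous `f`, `(n+1) * ∫_{b}^{b+1/(n+1)} f → f b`. -/
lemma tendsto_avg_integral {f : ℝ → ℝ} (hf : Continuous f) (b : ℝ) :
    Tendsto (fun n : ℕ => ((n : ℝ) + 1) * ∫ x in b..(b + 1 / ((n : ℝ) + 1)), f x)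
      atTop (𝓝 (f b)) := by
  have hF : HasDerivAt (fun y => ∫ x in b..y, f x) (f b) b :=
    integral_hasDerivAt_right (hf.intervalIntegrable _ _)
      (hf.stronglyMeasurable.stronglyMeasurableAtFilter) hf.continuousAt
  have hslope := hasDerivAt_iff_tendsto_slope.1 hF
  have hcmp := hslope.comp (tendsto_seq_nhdsNE b)
  have heq : ∀ n : ℕ, slope (fun y => ∫ x in b..y, f x) b (b + 1 / ((n:ℝ)+1))
      = ((n : ℝ) + 1) * ∫ x in b..(b + 1 / ((n : ℝ) + 1)), f x := by
    intro n
    have hd : b + 1 / ((n:ℝ)+1) - b = 1 / ((n:ℝ)+1) := by ring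
    rw [slope_def_field, intervalIntegral.integral_same, sub_zero, hd, one_div, div_eq_mul_inv, inv_inv]
    ring
  exact hcmp.congr heq

/-- FTC for Lipschitz functions: `f b - f c = ∫_c^b deriv f`. -/
lemma lip_ftc {f : ℝ → ℝ} {K : NNReal} (hf : LipschitzWith K f) {c b : ℝ} (hcb : c ≤ b) :
    f b - f c = ∫ x in Ioc c b, deriv f x := by
  have hcont : Continuous f := hf.continuous
  set q : ℕ → ℝ → ℝ := fun n x => ((n : ℝ) + 1) * (f (x + 1 / ((n : ℝ) + 1)) - f x) with hq
  have hq_cont : ∀ n, Continuous (q n) :=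
    fun n => continuous_const.mul ((hcont.comp (by continuity)).sub hcont)
  have hq_bound : ∀ n x, |q n x| ≤ (K : ℝ) := by
    intro n x
    have h1 : |f (x + 1 / ((n : ℝ) + 1)) - f x| ≤ (K : ℝ) * (1 / ((n:ℝ)+1)) := by
      have h2 := hf.dist_le_mul (x + 1 / ((n : ℝ) + 1)) x
      have hd : dist (x + 1 / ((n : ℝ) + 1)) x = 1 / ((n:ℝ)+1) := by
        rw [Real.dist_eq]
        have : x + 1 / ((n:ℝ)+1) - x = 1 / ((n:ℝ)+1) := by ring
        rw [this, abs_of_pos (by positivity)]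
      rw [Real.dist_eq] at h2; rw [hd] at h2; exact h2
    have hn : (0:ℝ) < (n : ℝ) + 1 := by positivity
    simp only [hq]
    rw [abs_mul, abs_of_pos hn]
    calc ((n:ℝ)+1) * |f (x + 1 / ((n : ℝ) + 1)) - f x|
        ≤ ((n:ℝ)+1) * ((K : ℝ) * (1/((n:ℝ)+1))) := mul_le_mul_of_nonneg_left h1 hn.le
      _ = (K : ℝ) := by field_simp
  have hae : ∀ᵐ x : ℝ, Tendsto (fun n => q n x) atTop (𝓝 (deriv f x)) := by
    filter_upwards [hf.ae_differentiableAt (μ := volume)] with x hx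
    have hslope := hasDerivAt_iff_tendsto_slope.1 hx.hasDerivAt
    have hcmp := hslope.comp (tendsto_seq_nhdsNE x)
    refine hcmp.congr fun n => ?_
    have hd : x + 1 / ((n:ℝ)+1) - x = 1 / ((n:ℝ)+1) := by ring
    show slope f x (x + 1 / ((n:ℝ)+1)) = q n x
    rw [slope_def_field, hd, one_div, div_eq_mul_inv, inv_inv]
    simp only [hq, one_div]; ring
  have hdom : Tendsto (fun n => ∫ x in Ioc c b, q n x) atTop
      (𝓝 (∫ x in Ioc c b, deriv f x)) := by
    apply tendsto_integral_of_dominated_convergence (fun _ => (K : ℝ))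
    · exact fun n => ((hq_cont n).aestronglyMeasurable).restrict
    · refine integrableOn_const (ne_of_lt ?_)
      rw [Real.volume_Ioc]; exact ENNReal.ofReal_lt_top
    · intro n
      filter_upwards with x
      rw [Real.norm_eq_abs]; exact hq_bound n x
    · exact ae_restrict_of_ae hae
  have hint : ∀ n : ℕ, ∫ x in c..b, q n x
      = ((n:ℝ)+1) * ((∫ x in b..(b + 1/((n:ℝ)+1)), f x) - ∫ x in c..(c + 1/((n:ℝ)+1)), f x) := by
    intro n
    set h : ℝ := 1 / ((n:ℝ)+1) with hh
    have hint1 : ∫ x in c..b, f (x + h) = ∫ x in (c+h)..(b+h), f x :=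
      intervalIntegral.integral_comp_add_right f h
    have hi : ∀ u v : ℝ, IntervalIntegrable f volume u v := fun u v => hcont.intervalIntegrable u v
    have hih : IntervalIntegrable (fun x => f (x + h)) volume c b :=
      Continuous.intervalIntegrable (by continuity) c b
    have hsplit1 : (∫ x in c..(c+h), f x) + ∫ x in (c+h)..(b+h), f x = ∫ x in c..(b+h), f x :=
      intervalIntegral.integral_add_adjacent_intervals (hi _ _) (hi _ _)
    have hsplit2 : (∫ x in c..b, f x) + ∫ x in b..(b+h), f x = ∫ x in c..(b+h), f x :=
      intervalIntegral.integral_add_adjacent_intervals (hi _ _) (hi _ _)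
    have hmain : ∫ x in c..b, q n x = ((n:ℝ)+1) * ((∫ x in c..b, f (x+h)) - ∫ x in c..b, f x) := by
      rw [← intervalIntegral.integral_sub hih (hi c b), ← intervalIntegral.integral_const_mul]
    rw [hmain, hint1]
    have : (∫ x in (c+h)..(b+h), f x) - ∫ x in c..b, f x
        = (∫ x in b..(b+h), f x) - ∫ x in c..(c+h), f x := by
      linarith [hsplit1, hsplit2]
    rw [this]
  have hlim2 : Tendsto (fun n : ℕ => ∫ x in c..b, q n x) atTop (𝓝 (f b - f c)) := by
    have h1 := tendsto_avg_integral hcont b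
    have h2 := tendsto_avg_integral hcont c
    refine (h1.sub h2).congr' ?_
    filter_upwards with n
    rw [hint n]; ring
  have heqio : ∀ n, ∫ x in c..b, q n x = ∫ x in Ioc c b, q n x := fun n =>
    intervalIntegral.integral_of_le hcb
  exact tendsto_nhds_unique (hlim2.congr fun n => heqio n) hdom

lemma lip_deriv_abs_le {f : ℝ → ℝ} {K : NNReal} (hf : LipschitzWith K f) (x : ℝ) :
    |deriv f x| ≤ (K : ℝ) := by
  simpa [Real.norm_eq_abs] using norm_deriv_le_of_lipschitz (𝕜 := ℝ) hf (x₀ := x)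

lemma lip_abs_sub_le {f : ℝ → ℝ} {K : NNReal} (hf : LipschitzWith K f) {lo hi b c : ℝ}
    (hb : b ∈ Icc lo hi) (hc : c ∈ Icc lo hi) :
    |f b - f c| ≤ ∫ x in Icc lo hi, |deriv f x| := by
  have hint : IntegrableOn (fun x => |deriv f x|) (Icc lo hi) := by
    apply Measure.integrableOn_of_bounded (M := (K:ℝ))
    · rw [Real.volume_Icc]; exact ENNReal.ofReal_ne_top
    · exact ((measurable_deriv f).abs).aestronglyMeasurable
    · filter_upwards with x
      rw [Real.norm_eq_abs, abs_abs]; exact lip_deriv_abs_le hf x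
  have key : ∀ b c : ℝ, c ≤ b → b ∈ Icc lo hi → c ∈ Icc lo hi →
      |f b - f c| ≤ ∫ x in Icc lo hi, |deriv f x| := by
    intro b c hcb hb hc
    rw [lip_ftc hf hcb]
    calc |∫ x in Ioc c b, deriv f x| ≤ ∫ x in Ioc c b, |deriv f x| := by
          simpa [Real.norm_eq_abs] using
            norm_integral_le_integral_norm (μ := volume.restrict (Ioc c b)) (deriv f)
      _ ≤ ∫ x in Icc lo hi, |deriv f x| := by
          apply setIntegral_mono_set hint
          · filter_upwards with x using abs_nonneg _
          · exact HasSubset.Subset.eventuallyLE (fun x hx => ⟨hc.1.trans hx.1.le, hx.2.trans hb.2⟩)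
  rcases le_total c b with h | h
  · exact key b c h hb hc
  · rw [abs_sub_comm]; exact key c b h hc hb

lemma slice_hasDerivAt_fst {g : ℝ×ℝ → ℝ} {s t : ℝ} (h : DifferentiableAt ℝ g (s, t)) :
    HasDerivAt (fun z => g (z, t)) (fderiv ℝ g (s, t) (1, 0)) s :=
  h.hasFDerivAt.comp_hasDerivAt s (HasDerivAt.prodMk (hasDerivAt_id s) (hasDerivAt_const s t))

lemma slice_hasDerivAt_snd {g : ℝ×ℝ → ℝ} {s t : ℝ} (h : DifferentiableAt ℝ g (t, s)) :
    HasDerivAt (fun z => g (t, z)) (fderiv ℝ g (t, s) (0, 1)) s :=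
  h.hasFDerivAt.comp_hasDerivAt s (HasDerivAt.prodMk (hasDerivAt_const s t) (hasDerivAt_id s))

lemma apply_le_opNorm_unit (L : ℝ × ℝ →L[ℝ] ℝ) (v : ℝ × ℝ) (hv : ‖v‖ = 1) :
    |L v| ≤ ‖L‖ := by
  have := L.le_opNorm v
  rwa [hv, mul_one, Real.norm_eq_abs] at this

lemma norm_one_zero : ‖((1 : ℝ), (0 : ℝ))‖ = 1 := by
  simp [Prod.norm_def]

lemma norm_zero_one : ‖((0 : ℝ), (1 : ℝ))‖ = 1 := by
  simp [Prod.norm_def]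

lemma slice_bound_fst {g : ℝ × ℝ → ℝ} {K : NNReal} (hg : LipschitzWith K g) {a t : ℝ}
    (ha : 0 < a) (hdiff : ∀ᵐ s : ℝ, DifferentiableAt ℝ g (s, t)) {b c : ℝ}
    (hb : b ∈ Icc 0 a) (hc : c ∈ Icc 0 a) :
    (g (b, t) - g (c, t)) ^ 2 ≤ a * ∫ s in Icc 0 a, ‖fderiv ℝ g (s, t)‖ ^ 2 := by
  set f : ℝ → ℝ := fun z => g (z, t) with hfdef
  have hf : LipschitzWith K f := by
    have h := hg.comp (LipschitzWith.prodMk_right t); rw [mul_one] at h; exact h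
  have hIccR : (volume (Icc (0:ℝ) a)).toReal = a := by
    rw [Real.volume_Icc, sub_zero, ENNReal.toReal_ofReal ha.le]
  have hIccfin : volume (Icc (0:ℝ) a) ≠ ⊤ := by
    rw [Real.volume_Icc]; exact ENNReal.ofReal_ne_top
  have hmeasD : Measurable fun s : ℝ => ‖fderiv ℝ g (s, t)‖ :=
    ((measurable_fderiv ℝ g).comp (measurable_id.prodMk measurable_const)).norm
  have hbddD : ∀ s : ℝ, ‖fderiv ℝ g (s, t)‖ ≤ (K : ℝ) := fun s =>
    norm_fderiv_le_of_lipschitz ℝ hg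
  have hintD : IntegrableOn (fun s : ℝ => ‖fderiv ℝ g (s, t)‖) (Icc 0 a) := by
    apply Measure.integrableOn_of_bounded (M := (K:ℝ)) hIccfin hmeasD.aestronglyMeasurable
    filter_upwards with s
    rw [Real.norm_eq_abs, abs_of_nonneg (norm_nonneg _)]; exact hbddD s
  have hintD2 : IntegrableOn (fun s : ℝ => ‖fderiv ℝ g (s, t)‖ ^ 2) (Icc 0 a) := by
    apply Measure.integrableOn_of_bounded (M := (K:ℝ)^2) hIccfin
      (hmeasD.pow_const 2).aestronglyMeasurable
    filter_upwards with s
    rw [Real.norm_eq_abs, abs_of_nonneg (by positivity)]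
    exact pow_le_pow_left₀ (norm_nonneg _) (hbddD s) 2
  have hintd : IntegrableOn (fun s : ℝ => |deriv f s|) (Icc 0 a) := by
    apply Measure.integrableOn_of_bounded (M := (K:ℝ)) hIccfin
      ((measurable_deriv f).abs).aestronglyMeasurable
    filter_upwards with s
    rw [Real.norm_eq_abs, abs_abs]; exact lip_deriv_abs_le hf s
  have h1 : |f b - f c| ≤ ∫ s in Icc 0 a, |deriv f s| := lip_abs_sub_le hf hb hc
  have h2 : ∫ s in Icc 0 a, |deriv f s| ≤ ∫ s in Icc 0 a, ‖fderiv ℝ g (s, t)‖ := by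
    apply integral_mono_ae hintd hintD
    filter_upwards [ae_restrict_of_ae hdiff] with s hs
    have hd : deriv f s = fderiv ℝ g (s, t) (1, 0) := (slice_hasDerivAt_fst hs).deriv
    rw [hd]
    exact apply_le_opNorm_unit _ _ norm_one_zero
  have h3 : (∫ s in Icc 0 a, ‖fderiv ℝ g (s, t)‖) ^ 2
      ≤ a * ∫ s in Icc 0 a, ‖fderiv ℝ g (s, t)‖ ^ 2 :=
    sq_setIntegral_le ha hIccR hintD hintD2
  have habs : |f b - f c| ≤ ∫ s in Icc 0 a, ‖fderiv ℝ g (s, t)‖ := h1.trans h2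
  calc (g (b, t) - g (c, t)) ^ 2 = |f b - f c| ^ 2 := by rw [sq_abs]
    _ ≤ (∫ s in Icc 0 a, ‖fderiv ℝ g (s, t)‖) ^ 2 := pow_le_pow_left₀ (abs_nonneg _) habs 2
    _ ≤ a * ∫ s in Icc 0 a, ‖fderiv ℝ g (s, t)‖ ^ 2 := h3

lemma slice_bound_snd {g : ℝ × ℝ → ℝ} {K : NNReal} (hg : LipschitzWith K g) {a t : ℝ}
    (ha : 0 < a) (hdiff : ∀ᵐ s : ℝ, DifferentiableAt ℝ g (t, s)) {b c : ℝ}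
    (hb : b ∈ Icc 0 a) (hc : c ∈ Icc 0 a) :
    (g (t, b) - g (t, c)) ^ 2 ≤ a * ∫ s in Icc 0 a, ‖fderiv ℝ g (t, s)‖ ^ 2 := by
  set f : ℝ → ℝ := fun z => g (t, z) with hfdef
  have hf : LipschitzWith K f := by
    have h := hg.comp (LipschitzWith.prodMk_left t); rw [mul_one] at h; exact h
  have hIccR : (volume (Icc (0:ℝ) a)).toReal = a := by
    rw [Real.volume_Icc, sub_zero, ENNReal.toReal_ofReal ha.le]
  have hIccfin : volume (Icc (0:ℝ) a) ≠ ⊤ := by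
    rw [Real.volume_Icc]; exact ENNReal.ofReal_ne_top
  have hmeasD : Measurable fun s : ℝ => ‖fderiv ℝ g (t, s)‖ :=
    ((measurable_fderiv ℝ g).comp (measurable_const.prodMk measurable_id)).norm
  have hbddD : ∀ s : ℝ, ‖fderiv ℝ g (t, s)‖ ≤ (K : ℝ) := fun s =>
    norm_fderiv_le_of_lipschitz ℝ hg
  have hintD : IntegrableOn (fun s : ℝ => ‖fderiv ℝ g (t, s)‖) (Icc 0 a) := by
    apply Measure.integrableOn_of_bounded (M := (K:ℝ)) hIccfin hmeasD.aestronglyMeasurable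
    filter_upwards with s
    rw [Real.norm_eq_abs, abs_of_nonneg (norm_nonneg _)]; exact hbddD s
  have hintD2 : IntegrableOn (fun s : ℝ => ‖fderiv ℝ g (t, s)‖ ^ 2) (Icc 0 a) := by
    apply Measure.integrableOn_of_bounded (M := (K:ℝ)^2) hIccfin
      (hmeasD.pow_const 2).aestronglyMeasurable
    filter_upwards with s
    rw [Real.norm_eq_abs, abs_of_nonneg (by positivity)]
    exact pow_le_pow_left₀ (norm_nonneg _) (hbddD s) 2
  have hintd : IntegrableOn (fun s : ℝ => |deriv f s|) (Icc 0 a) := by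
    apply Measure.integrableOn_of_bounded (M := (K:ℝ)) hIccfin
      ((measurable_deriv f).abs).aestronglyMeasurable
    filter_upwards with s
    rw [Real.norm_eq_abs, abs_abs]; exact lip_deriv_abs_le hf s
  have h1 : |f b - f c| ≤ ∫ s in Icc 0 a, |deriv f s| := lip_abs_sub_le hf hb hc
  have h2 : ∫ s in Icc 0 a, |deriv f s| ≤ ∫ s in Icc 0 a, ‖fderiv ℝ g (t, s)‖ := by
    apply integral_mono_ae hintd hintD
    filter_upwards [ae_restrict_of_ae hdiff] with s hs
    have hd : deriv f s = fderiv ℝ g (t, s) (0, 1) := (slice_hasDerivAt_snd hs).deriv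
    rw [hd]
    exact apply_le_opNorm_unit _ _ norm_zero_one
  have h3 : (∫ s in Icc 0 a, ‖fderiv ℝ g (t, s)‖) ^ 2
      ≤ a * ∫ s in Icc 0 a, ‖fderiv ℝ g (t, s)‖ ^ 2 :=
    sq_setIntegral_le ha hIccR hintD hintD2
  have habs : |f b - f c| ≤ ∫ s in Icc 0 a, ‖fderiv ℝ g (t, s)‖ := h1.trans h2
  calc (g (t, b) - g (t, c)) ^ 2 = |f b - f c| ^ 2 := by rw [sq_abs]
    _ ≤ (∫ s in Icc 0 a, ‖fderiv ℝ g (t, s)‖) ^ 2 := pow_le_pow_left₀ (abs_nonneg _) habs 2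
    _ ≤ a * ∫ s in Icc 0 a, ‖fderiv ℝ g (t, s)‖ ^ 2 := h3

end PoincareAux

open Set Filter Topology in
set_option maxHeartbeats 1000000 in
/-- Two-dimensional Poincaré-type inequality on the square `Q = [0,a] × [0,a]`:
if a Lipschitz function `u` vanishes, on each horizontal slice indexed by
`t ∈ P`, at some point, where `P ⊆ [0,a]` has measure at least `γ a`, then
`∫_Q |u|² ≤ (2/γ + 2) a² ∫_Q |∇u|²`. -/
theorem stmt2 (a γ : ℝ) (ha : 0 < a) (hγ0 : 0 < γ) (hγ1 : γ < 1)
    (u : ℝ × ℝ → ℝ) (K : NNReal)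
    (hu : LipschitzOnWith K u (Set.Icc 0 a ×ˢ Set.Icc 0 a))
    (P : Set ℝ) (hPmeas : MeasurableSet P) (hP : P ⊆ Set.Icc 0 a)
    (hPvol : ENNReal.ofReal (γ * a) ≤ volume P)
    (hvanish : ∀ t ∈ P, ∃ x₁ ∈ Set.Icc 0 a, u (x₁, t) = 0) :
    ∫ x in Set.Icc 0 a ×ˢ Set.Icc 0 a, (u x) ^ 2
      ≤ (2 / γ + 2) * a ^ 2 *
        ∫ x in Set.Icc 0 a ×ˢ Set.Icc 0 a, ‖fderiv ℝ u x‖ ^ 2 := by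
  obtain ⟨g, hgK, hgu⟩ := hu.extend_real
  set Q : Set (ℝ × ℝ) := Icc (0:ℝ) a ×ˢ Icc (0:ℝ) a with hQdef
  have hQmeas : MeasurableSet Q := measurableSet_Icc.prod measurableSet_Icc
  have hvol2 : (volume : Measure (ℝ × ℝ)) = (volume : Measure ℝ).prod volume :=
    (MeasureTheory.Measure.volume_eq_prod ℝ ℝ)
  have hIccvol : volume (Icc (0:ℝ) a) = ENNReal.ofReal a := by
    rw [Real.volume_Icc, sub_zero]
  have hIccR : (volume (Icc (0:ℝ) a)).toReal = a := by
    rw [hIccvol, ENNReal.toReal_ofReal ha.le]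
  have hIccfin : volume (Icc (0:ℝ) a) ≠ ⊤ := by
    rw [hIccvol]; exact ENNReal.ofReal_ne_top
  have hQvol : volume Q = ENNReal.ofReal a * ENNReal.ofReal a := by
    rw [hQdef, hvol2, Measure.prod_prod, hIccvol]
  have hQfin : volume Q ≠ ⊤ := by
    rw [hQvol]; exact ENNReal.mul_ne_top ENNReal.ofReal_ne_top ENNReal.ofReal_ne_top
  have hQR : (volume Q).toReal = a ^ 2 := by
    rw [hQvol, ENNReal.toReal_mul, ENNReal.toReal_ofReal ha.le]; ring
  -- the energy density
  set W : ℝ × ℝ → ℝ := fun p => ‖fderiv ℝ g p‖ ^ 2 with hWdef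
  have hWmeas : Measurable W := ((measurable_fderiv ℝ g).norm).pow_const 2
  have hWnonneg : ∀ p, 0 ≤ W p := fun p => sq_nonneg _
  have hWbdd : ∀ p, W p ≤ (K:ℝ) ^ 2 := fun p =>
    pow_le_pow_left₀ (norm_nonneg _) (norm_fderiv_le_of_lipschitz ℝ hgK) 2
  have hWintQ : IntegrableOn W Q := by
    apply Measure.integrableOn_of_bounded (M := (K:ℝ)^2) hQfin hWmeas.aestronglyMeasurable
    filter_upwards with p
    rw [Real.norm_eq_abs, abs_of_nonneg (hWnonneg p)]; exact hWbdd p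
  have hrestr : (volume : Measure (ℝ × ℝ)).restrict Q
      = ((volume : Measure ℝ).restrict (Icc 0 a)).prod ((volume : Measure ℝ).restrict (Icc 0 a)) := by
    rw [hQdef, hvol2, Measure.prod_restrict]
  have hWintP : Integrable W
      (((volume : Measure ℝ).restrict (Icc 0 a)).prod ((volume : Measure ℝ).restrict (Icc 0 a))) := by
    rw [← hrestr]; exact hWintQ
  set E : ℝ := ∫ p in Q, W p with hEdef
  set F : ℝ → ℝ := fun t => ∫ s in Icc (0:ℝ) a, W (s, t) with hFdef
  set G : ℝ → ℝ := fun z => ∫ s in Icc (0:ℝ) a, W (z, s) with hGdef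
  have hEG : E = ∫ z in Icc (0:ℝ) a, G z := by
    rw [hEdef, hrestr]
    exact integral_prod W hWintP
  have hEF : E = ∫ t in Icc (0:ℝ) a, F t := by
    rw [hEG]
    exact integral_integral_swap hWintP
  -- measurability and bounds for F and G
  have hFmeas : Measurable F := by
    have hJ : StronglyMeasurable fun q : ℝ × ℝ => (univ ×ˢ Icc (0:ℝ) a).indicator
        (fun q' : ℝ × ℝ => W (q'.2, q'.1)) q :=
      ((hWmeas.comp (measurable_snd.prodMk measurable_fst)).indicator
        (MeasurableSet.univ.prod measurableSet_Icc)).stronglyMeasurable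
    have := hJ.integral_prod_right' (ν := volume)
    have heq : F = fun t => ∫ s, (univ ×ˢ Icc (0:ℝ) a).indicator
        (fun q' : ℝ × ℝ => W (q'.2, q'.1)) (t, s) := by
      funext t
      show (∫ s in Icc (0:ℝ) a, W (s, t)) = _
      rw [← integral_indicator measurableSet_Icc]
      congr 1
      funext s
      by_cases hs : s ∈ Icc (0:ℝ) a
      · rw [indicator_of_mem hs, indicator_of_mem (by simp [hs])]
      · rw [indicator_of_notMem hs, indicator_of_notMem (by simp [hs])]
    rw [heq]
    exact this.measurable
  have hGmeas : Measurable G := by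
    have hJ : StronglyMeasurable fun q : ℝ × ℝ => (univ ×ˢ Icc (0:ℝ) a).indicator
        (fun q' : ℝ × ℝ => W (q'.1, q'.2)) q :=
      ((hWmeas.comp (measurable_fst.prodMk measurable_snd)).indicator
        (MeasurableSet.univ.prod measurableSet_Icc)).stronglyMeasurable
    have := hJ.integral_prod_right' (ν := volume)
    have heq : G = fun z => ∫ s, (univ ×ˢ Icc (0:ℝ) a).indicator
        (fun q' : ℝ × ℝ => W (q'.1, q'.2)) (z, s) := by
      funext z
      show (∫ s in Icc (0:ℝ) a, W (z, s)) = _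
      rw [← integral_indicator measurableSet_Icc]
      congr 1
      funext s
      by_cases hs : s ∈ Icc (0:ℝ) a
      · rw [indicator_of_mem hs, indicator_of_mem (by simp [hs])]
      · rw [indicator_of_notMem hs, indicator_of_notMem (by simp [hs])]
    rw [heq]
    exact this.measurable
  have hFnonneg : ∀ t, 0 ≤ F t := fun t => integral_nonneg fun s => hWnonneg _
  have hGnonneg : ∀ z, 0 ≤ G z := fun z => integral_nonneg fun s => hWnonneg _
  have hFbdd : ∀ t, F t ≤ a * (K:ℝ)^2 := by
    intro t
    have : ∫ s in Icc (0:ℝ) a, W (s, t) ≤ ∫ s in Icc (0:ℝ) a, (K:ℝ)^2 := by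
      apply integral_mono_ae
      · apply Measure.integrableOn_of_bounded (M := (K:ℝ)^2) hIccfin
          (show Measurable fun s : ℝ => W (s, t) from
            hWmeas.comp (measurable_id.prodMk measurable_const)).aestronglyMeasurable
        filter_upwards with s
        rw [Real.norm_eq_abs, abs_of_nonneg (hWnonneg _)]; exact hWbdd _
      · exact integrableOn_const hIccfin
      · filter_upwards with s using hWbdd _
    calc F t ≤ ∫ s in Icc (0:ℝ) a, (K:ℝ)^2 := this
      _ = a * (K:ℝ)^2 := by rw [setIntegral_const, smul_eq_mul, measureReal_def, hIccR]
  have hGbdd : ∀ z, G z ≤ a * (K:ℝ)^2 := by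
    intro z
    have : ∫ s in Icc (0:ℝ) a, W (z, s) ≤ ∫ s in Icc (0:ℝ) a, (K:ℝ)^2 := by
      apply integral_mono_ae
      · apply Measure.integrableOn_of_bounded (M := (K:ℝ)^2) hIccfin
          (show Measurable fun s : ℝ => W (z, s) from
            hWmeas.comp (measurable_const.prodMk measurable_id)).aestronglyMeasurable
        filter_upwards with s
        rw [Real.norm_eq_abs, abs_of_nonneg (hWnonneg _)]; exact hWbdd _
      · exact integrableOn_const hIccfin
      · filter_upwards with s using hWbdd _
    calc G z ≤ ∫ s in Icc (0:ℝ) a, (K:ℝ)^2 := this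
      _ = a * (K:ℝ)^2 := by rw [setIntegral_const, smul_eq_mul, measureReal_def, hIccR]
  have hFintIcc : IntegrableOn F (Icc 0 a) := by
    apply Measure.integrableOn_of_bounded (M := a * (K:ℝ)^2) hIccfin
      hFmeas.aestronglyMeasurable
    filter_upwards with t
    rw [Real.norm_eq_abs, abs_of_nonneg (hFnonneg t)]; exact hFbdd t
  have hPfin : volume P ≠ ⊤ := ((measure_mono hP).trans_lt (by rw [hIccvol]; exact ENNReal.ofReal_lt_top)).ne
  have hFintP : IntegrableOn F P := by
    apply Measure.integrableOn_of_bounded (M := a * (K:ℝ)^2) hPfin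
      hFmeas.aestronglyMeasurable
    filter_upwards with t
    rw [Real.norm_eq_abs, abs_of_nonneg (hFnonneg t)]; exact hFbdd t
  have hEnonneg : 0 ≤ E := by
    rw [hEdef]; exact integral_nonneg fun p => hWnonneg p
  have hFPE : ∫ t in P, F t ≤ E := by
    rw [hEF]
    apply setIntegral_mono_set hFintIcc
    · filter_upwards with t using hFnonneg t
    · exact HasSubset.Subset.eventuallyLE hP
  -- measure of P
  set m : ℝ := (volume P).toReal with hmdef
  have hm : γ * a ≤ m := by
    rw [hmdef, ← ENNReal.toReal_ofReal (by positivity : (0:ℝ) ≤ γ * a)]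
    exact ENNReal.toReal_mono hPfin hPvol
  have hmpos : 0 < m := lt_of_lt_of_le (by positivity) hm
  have halg : ∀ e : ℝ, 2 * a * e / (γ * a) = 2 / γ * e := by
    intro e; field_simp
  -- a.e. differentiability along slices
  have hdiff2 : ∀ᵐ p : ℝ × ℝ, DifferentiableAt ℝ g p := hgK.ae_differentiableAt
  have hdiff2' : ∀ᵐ p ∂((volume : Measure ℝ).prod volume), DifferentiableAt ℝ g p := by
    rw [← hvol2]; exact hdiff2
  have hB : ∀ᵐ z : ℝ, ∀ᵐ s : ℝ, DifferentiableAt ℝ g (z, s) :=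
    Measure.ae_ae_of_ae_prod hdiff2'
  have hA : ∀ᵐ t : ℝ, ∀ᵐ s : ℝ, DifferentiableAt ℝ g (s, t) := by
    have hswap : ∀ᵐ q ∂((volume : Measure ℝ).prod volume), DifferentiableAt ℝ g (q.2, q.1) :=
      Measure.measurePreserving_swap.quasiMeasurePreserving.ae hdiff2'
    exact Measure.ae_ae_of_ae_prod hswap
  have hBlift : ∀ᵐ p : ℝ × ℝ, ∀ᵐ s : ℝ, DifferentiableAt ℝ g (p.1, s) := by
    rw [hvol2]
    exact Measure.quasiMeasurePreserving_fst.ae hB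
  -- the main pointwise (a.e.) bound
  have hclaim : ∀ᵐ p : ℝ × ℝ, p ∈ Q → g p ^ 2 ≤ 2 * a * G p.1 + 2 / γ * E := by
    filter_upwards [hBlift] with p hp hpQ
    have hz : p.1 ∈ Icc (0:ℝ) a := hpQ.1
    have hx2 : p.2 ∈ Icc (0:ℝ) a := hpQ.2
    have key : ∀ᵐ t ∂(volume.restrict P), g p ^ 2 ≤ 2 * a * G p.1 + 2 * a * F t := by
      filter_upwards [ae_restrict_of_ae hA, ae_restrict_mem hPmeas] with t hAt htP
      obtain ⟨y, hy, hy0⟩ := hvanish t htP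
      have htIcc : t ∈ Icc (0:ℝ) a := hP htP
      have hg0 : g (y, t) = 0 := by
        rw [← hgu (show ((y, t) : ℝ × ℝ) ∈ Q from ⟨hy, htIcc⟩)]
        exact hy0
      have h1 : (g (p.1, t)) ^ 2 ≤ a * F t := by
        have := slice_bound_fst hgK ha hAt hz hy
        rw [hg0, sub_zero] at this
        exact this
      have h2 : (g (p.1, p.2) - g (p.1, t)) ^ 2 ≤ a * G p.1 :=
        slice_bound_snd hgK ha hp hx2 htIcc
      have hpe : g p = g (p.1, p.2) := rfl
      rw [hpe]
      nlinarith [h1, h2, sq_nonneg (g (p.1, p.2) - 2 * g (p.1, t))]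
    have hIntL : IntegrableOn (fun _ : ℝ => g p ^ 2) P :=
      integrableOn_const hPfin
    have hIntR : IntegrableOn (fun t => 2 * a * G p.1 + 2 * a * F t) P :=
      (integrableOn_const hPfin).add (hFintP.const_mul _)
    have hmono := integral_mono_ae hIntL hIntR key
    rw [setIntegral_const, smul_eq_mul, measureReal_def, ← hmdef] at hmono
    have hRHS : ∫ t in P, (2 * a * G p.1 + 2 * a * F t)
        = m * (2 * a * G p.1) + 2 * a * ∫ t in P, F t := by
      rw [integral_add (integrableOn_const (C := 2 * a * G p.1) hPfin) (hFintP.const_mul _),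
        setIntegral_const, smul_eq_mul, integral_const_mul, measureReal_def, ← hmdef]
    rw [hRHS] at hmono
    have hstep : m * (g p ^ 2) ≤ m * (2 * a * G p.1) + 2 * a * E := by
      have h2a : (0:ℝ) ≤ 2 * a := by positivity
      nlinarith [hFPE, hmono]
    have hstep2 : g p ^ 2 ≤ 2 * a * G p.1 + 2 * a * E / m := by
      have hsub : g p ^ 2 - 2 * a * G p.1 ≤ 2 * a * E / m := by
        rw [le_div_iff₀ hmpos]
        nlinarith [hstep]
      linarith [hsub]
    have hdiv : 2 * a * E / m ≤ 2 * a * E / (γ * a) := by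
      rw [div_le_div_iff₀ hmpos (by positivity)]
      have h2aE : (0:ℝ) ≤ 2 * a * E := by positivity
      nlinarith [mul_le_mul_of_nonneg_left hm h2aE]
    linarith [hstep2, hdiv, (halg E).le, (halg E).ge]
  -- interior: fderiv of u equals fderiv of g a.e. on Q
  set O : Set (ℝ × ℝ) := Ioo (0:ℝ) a ×ˢ Ioo (0:ℝ) a with hOdef
  have hOopen : IsOpen O := isOpen_Ioo.prod isOpen_Ioo
  have hOQ : O ⊆ Q := prod_mono Ioo_subset_Icc_self Ioo_subset_Icc_self
  have hOvol : volume O = ENNReal.ofReal a * ENNReal.ofReal a := by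
    rw [hOdef, hvol2, Measure.prod_prod, Real.volume_Ioo, sub_zero]
  have hnull : volume (Q \ O) = 0 := by
    rw [measure_diff hOQ hOopen.measurableSet.nullMeasurableSet
      (by rw [hOvol]; exact ENNReal.mul_ne_top ENNReal.ofReal_ne_top ENNReal.ofReal_ne_top),
      hQvol, hOvol, tsub_self]
  have hfd : ∀ᵐ p : ℝ × ℝ, p ∈ Q → ‖fderiv ℝ u p‖ ^ 2 = W p := by
    filter_upwards [measure_eq_zero_iff_ae_notMem.mp hnull] with p hpn hpQ
    have hpO : p ∈ O := by
      by_contra hc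
      exact hpn ⟨hpQ, hc⟩
    have hev : u =ᶠ[𝓝 p] g := by
      filter_upwards [hOopen.mem_nhds hpO] with y hy
      exact hgu (hOQ hy)
    show ‖fderiv ℝ u p‖ ^ 2 = ‖fderiv ℝ g p‖ ^ 2
    rw [hev.fderiv_eq]
  have hEu : ∫ p in Q, ‖fderiv ℝ u p‖ ^ 2 = E := by
    rw [hEdef]
    exact setIntegral_congr_ae hQmeas hfd
  -- final integration over Q
  have hLHS : ∫ p in Q, u p ^ 2 = ∫ p in Q, g p ^ 2 :=
    setIntegral_congr_fun hQmeas fun p hp => by rw [hgu hp]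
  have hg2int : IntegrableOn (fun p => g p ^ 2) Q :=
    ((hgK.continuous.pow 2).continuousOn).integrableOn_compact
      (isCompact_Icc.prod isCompact_Icc)
  have hGfstint : Integrable (fun p : ℝ × ℝ => G p.1) (volume.restrict Q) := by
    apply Measure.integrableOn_of_bounded (M := a * (K:ℝ)^2) hQfin
      ((show Measurable fun p : ℝ × ℝ => G p.1 from
        hGmeas.comp measurable_fst).aestronglyMeasurable)
    filter_upwards with p
    rw [Real.norm_eq_abs, abs_of_nonneg (hGnonneg _)]; exact hGbdd _
  have hconstint : IntegrableOn (fun _ : ℝ × ℝ => 2 / γ * E) Q :=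
    integrableOn_const hQfin
  have hHint : IntegrableOn (fun p : ℝ × ℝ => 2 * a * G p.1 + 2 / γ * E) Q :=
    (hGfstint.const_mul _).add hconstint
  have hmono2 : ∫ p in Q, g p ^ 2 ≤ ∫ p in Q, (2 * a * G p.1 + 2 / γ * E) := by
    apply integral_mono_ae hg2int hHint
    filter_upwards [ae_restrict_of_ae hclaim, ae_restrict_mem hQmeas] with p h1 h2
    exact h1 h2
  have hGfstint' : Integrable (fun p : ℝ × ℝ => G p.1)
      (((volume : Measure ℝ).restrict (Icc 0 a)).prod ((volume : Measure ℝ).restrict (Icc 0 a))) := by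
    rw [← hrestr]; exact hGfstint
  have hGfst : ∫ p in Q, G p.1 = a * E := by
    have h1 : ∫ p in Q, G p.1 = ∫ x in Icc (0:ℝ) a, ∫ y in Icc (0:ℝ) a, G x := by
      rw [hrestr]; exact integral_prod _ hGfstint'
    have h2 : ∀ x : ℝ, (∫ y in Icc (0:ℝ) a, G x) = a * G x := by
      intro x; rw [setIntegral_const, smul_eq_mul, measureReal_def, hIccR]
    rw [h1]
    calc ∫ x in Icc (0:ℝ) a, ∫ y in Icc (0:ℝ) a, G x
        = ∫ x in Icc (0:ℝ) a, a * G x := by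
          exact integral_congr_ae (Eventually.of_forall fun x => h2 x)
      _ = a * ∫ x in Icc (0:ℝ) a, G x := by rw [integral_const_mul]
      _ = a * E := by rw [← hEG]
  have hRHS2 : ∫ p in Q, (2 * a * G p.1 + 2 / γ * E)
      = 2 * a * (a * E) + a ^ 2 * (2 / γ * E) := by
    rw [integral_add (hGfstint.const_mul _) hconstint, integral_const_mul, hGfst,
      setIntegral_const, smul_eq_mul, measureReal_def, hQR]
  calc ∫ p in Q, u p ^ 2 = ∫ p in Q, g p ^ 2 := hLHS
    _ ≤ ∫ p in Q, (2 * a * G p.1 + 2 / γ * E) := hmono2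
    _ = 2 * a * (a * E) + a ^ 2 * (2 / γ * E) := hRHS2
    _ = (2 / γ + 2) * a ^ 2 * E := by ring
    _ = (2 / γ + 2) * a ^ 2 * ∫ p in Q, ‖fderiv ℝ u p‖ ^ 2 := by rw [hEu]
end

section
/- Let Ω ⊆ ℝⁿ be a bounded open set with n ≥ 3 and finite Lebesgue measure. Then λ₁(Ω) ≥ C(n) / Vol(Ω)^{2/n}, where λ₁(Ω) is the first Dirichlet eigenvalue of the Laplacian on Ω and C(n) > 0 depends only on n. Equivalently, for every smooth compactly supported u on Ω, ∫_Ω |∇u|² ≥ C(n) Vol(Ω)^{-2/n} ∫_Ω |u|². -/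
open MeasureTheory Module
open scoped ENNReal NNReal

/-- Faber–Krahn type inequality in dimension `n ≥ 3` (non-sharp constant):
there is `C(n) > 0` such that for every bounded open `Ω ⊆ ℝⁿ` and every
smooth compactly supported `u` with support in `Ω`,
`∫_Ω |∇u|² ≥ C(n) Vol(Ω)^{-2/n} ∫_Ω |u|²`. -/
theorem stmt6 (n : ℕ) (hn : 3 ≤ n) :
    ∃ C > (0:ℝ), ∀ (Ω : Set (EuclideanSpace ℝ (Fin n))),
      IsOpen Ω → Bornology.IsBounded Ω →
      ∀ u : EuclideanSpace ℝ (Fin n) → ℝ,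
        ContDiff ℝ (⊤ : ℕ∞) u → HasCompactSupport u → tsupport u ⊆ Ω →
        C * ((volume Ω).toReal ^ ((2:ℝ) / n))⁻¹ * ∫ x in Ω, (u x) ^ 2
          ≤ ∫ x in Ω, ‖fderiv ℝ u x‖ ^ 2 := by
  have hn0 : (0:ℝ) < n := by positivity
  set K₀ : ℝ≥0 :=
    SNormLESNormFDerivOfEqConst ℝ (volume : Measure (EuclideanSpace ℝ (Fin n))) 2 with hK₀
  set M : ℝ := max (K₀ : ℝ) 1 with hM
  have hMpos : (0:ℝ) < M := lt_of_lt_of_le one_pos (le_max_right _ _)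
  refine ⟨(M ^ 2)⁻¹, by positivity, fun Ω hΩo hΩb u hu h2u h3u => ?_⟩
  have hE : finrank ℝ (EuclideanSpace ℝ (Fin n)) = n := finrank_euclideanSpace_fin
  have hu1 : ContDiff ℝ 1 u := hu.of_le (by simp)
  have hsupp : Function.support u ⊆ Ω := (subset_tsupport u).trans h3u
  -- reduce set integrals to full integrals
  set Iu : ℝ := ∫ x, (u x) ^ 2 with hIu
  set Id : ℝ := ∫ x, ‖fderiv ℝ u x‖ ^ 2 with hId
  have hIu0 : 0 ≤ Iu := integral_nonneg fun x => by positivity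
  have hId0 : 0 ≤ Id := integral_nonneg fun x => by positivity
  have e1 : ∫ x in Ω, (u x) ^ 2 = Iu := by
    refine setIntegral_eq_integral_of_forall_compl_eq_zero fun x hx => ?_
    have hx0 : u x = 0 := by
      by_contra h
      exact hx (hsupp (Function.mem_support.mpr h))
    simp [hx0]
  have e2 : ∫ x in Ω, ‖fderiv ℝ u x‖ ^ 2 = Id := by
    refine setIntegral_eq_integral_of_forall_compl_eq_zero fun x hx => ?_
    have hx0 : fderiv ℝ u x = 0 := by
      by_contra h
      have hxt : x ∈ tsupport u := support_fderiv_subset (𝕜 := ℝ) (Function.mem_support.mpr h)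
      exact hx (h3u hxt)
    simp [hx0]
  rw [e1, e2]
  set Vr : ℝ := (volume Ω).toReal with hVr
  have hVr0 : 0 ≤ Vr := ENNReal.toReal_nonneg
  rcases eq_or_lt_of_le hVr0 with hV | hV
  · rw [← hV, Real.zero_rpow (by positivity)]
    simpa using hId0
  -- the Sobolev inequality
  have key := eLpNorm_le_eLpNorm_fderiv (volume (α := EuclideanSpace ℝ (Fin n)))
    hu1 hsupp (p := 2) one_le_two (by rw [hE]; exact_mod_cast by omega) hΩb
  rw [eLpNormLESNormFDerivOfLeConst_def] at key
  simp only [hE, one_div] at key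
  have hsub : ((n:ℝ≥0))⁻¹ ≤ (2:ℝ≥0)⁻¹ := by
    rw [inv_le_inv₀ (by exact_mod_cast by omega) (by norm_num)]
    exact_mod_cast by omega
  have hexp : (((2:ℝ≥0)):ℝ)⁻¹ - ((((2:ℝ≥0)⁻¹ - ((n:ℝ≥0))⁻¹)⁻¹ : ℝ≥0) : ℝ)⁻¹ = (n:ℝ)⁻¹ := by
    rw [NNReal.coe_inv, inv_inv, NNReal.coe_sub hsub]
    push_cast
    ring
  rw [hexp] at key
  simp only [NNReal.coe_ofNat] at key
  rw [← hK₀] at key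
  set c : ℝ≥0 := (volume Ω).toNNReal ^ ((n:ℝ)⁻¹) * K₀ with hc
  -- convert eLpNorms to integrals
  have hmu : MemLp u 2 volume := hu.continuous.memLp_of_hasCompactSupport h2u
  have hcd : Continuous (fderiv ℝ u) := hu.continuous_fderiv (by simp)
  have hcs : HasCompactSupport (fderiv ℝ u) := h2u.fderiv (𝕜 := ℝ)
  have hmd : MemLp (fderiv ℝ u) 2 volume := hcd.memLp_of_hasCompactSupport hcs
  have eq1 : eLpNorm u ((2:ℝ≥0) : ℝ≥0∞) volume = ENNReal.ofReal (Iu ^ (2:ℝ)⁻¹) := by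
    rw [show ((2:ℝ≥0) : ℝ≥0∞) = (2:ℝ≥0∞) by norm_cast,
      hmu.eLpNorm_eq_integral_rpow_norm two_ne_zero ENNReal.ofNat_ne_top]
    simp only [ENNReal.toReal_ofNat, Real.rpow_two, Real.norm_eq_abs, sq_abs]
    rfl
  have eq2 : eLpNorm (fderiv ℝ u) ((2:ℝ≥0) : ℝ≥0∞) volume
      = ENNReal.ofReal (Id ^ (2:ℝ)⁻¹) := by
    rw [show ((2:ℝ≥0) : ℝ≥0∞) = (2:ℝ≥0∞) by norm_cast,
      hmd.eLpNorm_eq_integral_rpow_norm two_ne_zero ENNReal.ofNat_ne_top]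
    simp only [ENNReal.toReal_ofNat, Real.rpow_two, norm_norm]
    rfl
  rw [eq1, eq2] at key
  have key2 : Iu ^ (2:ℝ)⁻¹ ≤ (c : ℝ) * Id ^ (2:ℝ)⁻¹ := by
    rw [show ((c : ℝ≥0∞) * ENNReal.ofReal (Id ^ (2:ℝ)⁻¹))
        = ENNReal.ofReal ((c:ℝ) * Id ^ (2:ℝ)⁻¹) by
      rw [ENNReal.ofReal_mul c.coe_nonneg, ENNReal.ofReal_coe_nnreal]] at key
    exact (ENNReal.ofReal_le_ofReal_iff (by positivity)).mp key
  -- square both sides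
  have hsq : Iu ≤ (c:ℝ) ^ 2 * Id := by
    have h1 : (Iu ^ (2:ℝ)⁻¹) ^ 2 ≤ ((c:ℝ) * Id ^ (2:ℝ)⁻¹) ^ 2 :=
      pow_le_pow_left₀ (by positivity) key2 2
    have h2 : (Iu ^ (2:ℝ)⁻¹) ^ 2 = Iu := by
      rw [← Real.rpow_natCast (Iu ^ (2:ℝ)⁻¹) 2, ← Real.rpow_mul hIu0]
      norm_num
    have h3 : (Id ^ (2:ℝ)⁻¹) ^ 2 = Id := by
      rw [← Real.rpow_natCast (Id ^ (2:ℝ)⁻¹) 2, ← Real.rpow_mul hId0]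
      norm_num
    calc Iu = (Iu ^ (2:ℝ)⁻¹) ^ 2 := h2.symm
      _ ≤ ((c:ℝ) * Id ^ (2:ℝ)⁻¹) ^ 2 := h1
      _ = (c:ℝ)^2 * Id := by rw [mul_pow, h3]
  -- compute (c:ℝ)^2
  have hcoe : (c:ℝ) = Vr ^ ((n:ℝ)⁻¹) * (K₀:ℝ) := by
    rw [hc, NNReal.coe_mul, NNReal.coe_rpow]
    rfl
  have hVsq : (Vr ^ ((n:ℝ)⁻¹)) ^ 2 = Vr ^ ((2:ℝ)/n) := by
    rw [← Real.rpow_natCast (Vr ^ ((n:ℝ)⁻¹)) 2, ← Real.rpow_mul hVr0]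
    congr 1
    push_cast
    ring
  have hcR : (c:ℝ) ^ 2 = Vr ^ ((2:ℝ)/n) * (K₀:ℝ) ^ 2 := by
    rw [hcoe, mul_pow, hVsq]
  have hfinal : Iu ≤ Vr ^ ((2:ℝ)/n) * M ^ 2 * Id := by
    calc Iu ≤ (c:ℝ)^2 * Id := hsq
      _ = Vr ^ ((2:ℝ)/n) * (K₀:ℝ)^2 * Id := by rw [hcR]
      _ ≤ Vr ^ ((2:ℝ)/n) * M^2 * Id := by
          gcongr
          exact le_max_left _ _
  have hVpow : (0:ℝ) < Vr ^ ((2:ℝ)/n) := Real.rpow_pos_of_pos hV _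
  calc (M^2)⁻¹ * (Vr ^ ((2:ℝ)/n))⁻¹ * Iu
      ≤ (M^2)⁻¹ * (Vr ^ ((2:ℝ)/n))⁻¹ * (Vr ^ ((2:ℝ)/n) * M^2 * Id) := by
        gcongr
    _ = Id := by field_simp
end

section
/- Let Ω ⊆ ℝ² be a bounded open set of finite area. Then for every nonzero u ∈ C_c^∞(Ω), ∫_Ω |∇u|² dx ≥ (C / Area(Ω)) ∫_Ω |u|² dx for an absolute constant C > 0. In particular λ₁(Ω) ≥ C/Area(Ω). -/
open MeasureTheory
open scoped NNReal ENNReal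

section FKaux
open ENNReal Module Function
open scoped NNReal

variable {α : Type*} [MeasurableSpace α] {μ : Measure α} {G : Type*} [NormedAddCommGroup G]

lemma FK_sq_eLpNorm_two (f : α → G) :
    (eLpNorm f 2 μ) ^ 2 = ∫⁻ x, (‖f x‖₊ : ℝ≥0∞) ^ 2 ∂μ := by
  rw [eLpNorm_eq_lintegral_rpow_enorm_toReal two_ne_zero ENNReal.ofNat_ne_top]
  rw [← ENNReal.rpow_natCast _ 2, ← ENNReal.rpow_mul]
  norm_num
  rfl

lemma FK_integral_sq_eq {f : α → G} (hf : AEStronglyMeasurable f μ) :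
    ∫ x, ‖f x‖ ^ 2 ∂μ = (∫⁻ x, (‖f x‖₊ : ℝ≥0∞) ^ 2 ∂μ).toReal := by
  rw [integral_eq_lintegral_of_nonneg_ae (Filter.Eventually.of_forall fun x => sq_nonneg _)
      ((hf.norm.aemeasurable.pow_const 2).aestronglyMeasurable)]
  congr 1
  apply lintegral_congr
  intro x
  rw [ENNReal.ofReal_pow (norm_nonneg _), ofReal_norm]
  rfl

noncomputable abbrev FKE2 := EuclideanSpace ℝ (Fin 2)

noncomputable def FKconst : ℝ≥0 :=
  eLpNormLESNormFDerivOfEqInnerConst (volume : Measure FKE2) ((4/3 : ℝ≥0) : ℝ) + 1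

lemma FKconst_one_le : (1:ℝ≥0) ≤ FKconst := by rw [FKconst]; exact le_add_self

lemma FK_key_chain (Ω : Set FKE2)
    (u : FKE2 → ℝ) (hu : ContDiff ℝ (⊤ : ℕ∞) u) (h2u : HasCompactSupport u)
    (hsupp : tsupport u ⊆ Ω) :
    eLpNorm u 2 (volume.restrict Ω) ≤
      FKconst * eLpNorm (fderiv ℝ u) 2 (volume.restrict Ω) * (volume Ω) ^ ((1:ℝ)/2) := by
  set μΩ := volume.restrict Ω
  set K : ℝ≥0 := eLpNormLESNormFDerivOfEqInnerConst (volume : Measure FKE2) ((4/3 : ℝ≥0) : ℝ)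
  have hu1 : ContDiff ℝ 1 u := hu.of_le (by simp)
  have hus : Function.support u ⊆ Ω := (subset_tsupport u).trans hsupp
  have hdus : Function.support (fderiv ℝ u) ⊆ Ω := (support_fderiv_subset ℝ).trans hsupp
  have hcu : Continuous u := hu.continuous
  have hcdu : Continuous (fderiv ℝ u) := hu.continuous_fderiv (by simp)
  have hn : 0 < finrank ℝ FKE2 := by simp [finrank_euclideanSpace]
  have hp' : (((4:ℝ≥0)):ℝ)⁻¹ = ((4/3:ℝ≥0):ℝ)⁻¹ - (finrank ℝ FKE2 : ℝ)⁻¹ := by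
    simp [finrank_euclideanSpace]; norm_num
  have h43 : (1:ℝ≥0) ≤ 4/3 := by rw [← NNReal.coe_le_coe]; push_cast; norm_num
  have hsob := eLpNorm_le_eLpNorm_fderiv_of_eq_inner (volume : Measure FKE2) hu1 h2u
    (p := 4/3) (p' := 4) h43 hn hp'
  have h1 : eLpNorm u 2 μΩ ≤ eLpNorm u 4 μΩ * (volume Ω) ^ ((1:ℝ)/4) := by
    have := eLpNorm_le_eLpNorm_mul_rpow_measure_univ (p := 2) (q := 4)
      (by norm_num) hcu.aestronglyMeasurable (μ := μΩ)
    have he : 1 / (2:ℝ≥0∞).toReal - 1 / (4:ℝ≥0∞).toReal = (1:ℝ)/4 := by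
      simp; norm_num
    rw [he] at this
    simpa [μΩ, Measure.restrict_apply_univ] using this
  have h2 : eLpNorm (fderiv ℝ u) ((4/3:ℝ≥0) : ℝ≥0∞) μΩ
      ≤ eLpNorm (fderiv ℝ u) 2 μΩ * (volume Ω) ^ ((1:ℝ)/4) := by
    have hle : ((4/3:ℝ≥0) : ℝ≥0∞) ≤ 2 := by
      rw [show (2:ℝ≥0∞) = ((2:ℝ≥0):ℝ≥0∞) by norm_cast, ENNReal.coe_le_coe,
        ← NNReal.coe_le_coe]
      push_cast; norm_num
    have := eLpNorm_le_eLpNorm_mul_rpow_measure_univ (p := ((4/3:ℝ≥0) : ℝ≥0∞)) (q := 2)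
      hle hcdu.aestronglyMeasurable (μ := μΩ)
    have he : 1 / (((4/3:ℝ≥0) : ℝ≥0∞)).toReal - 1 / (2:ℝ≥0∞).toReal = (1:ℝ)/4 := by
      rw [ENNReal.coe_toReal]; push_cast; norm_num
    rw [he] at this
    simpa [μΩ, Measure.restrict_apply_univ] using this
  have hr4 : eLpNorm u ((4:ℝ≥0):ℝ≥0∞) μΩ = eLpNorm u ((4:ℝ≥0):ℝ≥0∞) volume :=
    eLpNorm_restrict_eq_of_support_subset hus
  have hr43 : eLpNorm (fderiv ℝ u) ((4/3:ℝ≥0):ℝ≥0∞) μΩ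
      = eLpNorm (fderiv ℝ u) ((4/3:ℝ≥0):ℝ≥0∞) volume :=
    eLpNorm_restrict_eq_of_support_subset (ε := FKE2 →L[ℝ] ℝ) hdus
  calc eLpNorm u 2 μΩ ≤ eLpNorm u 4 μΩ * (volume Ω) ^ ((1:ℝ)/4) := h1
    _ = eLpNorm u ((4:ℝ≥0):ℝ≥0∞) volume * (volume Ω) ^ ((1:ℝ)/4) := by
        norm_num at hr4 ⊢; rw [hr4]
    _ ≤ (K * eLpNorm (fderiv ℝ u) ((4/3:ℝ≥0):ℝ≥0∞) volume) * (volume Ω) ^ ((1:ℝ)/4) := by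
        gcongr
    _ = (K * eLpNorm (fderiv ℝ u) ((4/3:ℝ≥0):ℝ≥0∞) μΩ) * (volume Ω) ^ ((1:ℝ)/4) := by
        rw [hr43]
    _ ≤ (K * (eLpNorm (fderiv ℝ u) 2 μΩ * (volume Ω) ^ ((1:ℝ)/4))) * (volume Ω) ^ ((1:ℝ)/4) := by
        gcongr
    _ = K * eLpNorm (fderiv ℝ u) 2 μΩ * ((volume Ω) ^ ((1:ℝ)/4) * (volume Ω) ^ ((1:ℝ)/4)) := by
        ring
    _ = K * eLpNorm (fderiv ℝ u) 2 μΩ * (volume Ω) ^ ((1:ℝ)/2) := by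
        rw [← ENNReal.rpow_add_of_nonneg _ _ (by norm_num) (by norm_num)]
        norm_num
    _ ≤ FKconst * eLpNorm (fderiv ℝ u) 2 μΩ * (volume Ω) ^ ((1:ℝ)/2) := by
        gcongr
        rw [FKconst]
        exact_mod_cast le_self_add

end FKaux

/-- Two-dimensional Faber–Krahn type inequality (non-sharp constant): there is
an absolute constant `C > 0` such that for every bounded open `Ω ⊆ ℝ²` and
every smooth compactly supported `u` with support in `Ω`,
`∫_Ω |∇u|² ≥ (C / Area(Ω)) ∫_Ω |u|²`. -/
theorem stmt7 :
    ∃ C > (0:ℝ), ∀ (Ω : Set (EuclideanSpace ℝ (Fin 2))),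
      IsOpen Ω → Bornology.IsBounded Ω →
      ∀ u : EuclideanSpace ℝ (Fin 2) → ℝ,
        ContDiff ℝ (⊤ : ℕ∞) u → HasCompactSupport u → tsupport u ⊆ Ω →
        C / (volume Ω).toReal * ∫ x in Ω, (u x) ^ 2
          ≤ ∫ x in Ω, ‖fderiv ℝ u x‖ ^ 2 := by
  have hK : (0:ℝ) < FKconst :=
    lt_of_lt_of_le one_pos (by exact_mod_cast FKconst_one_le)
  refine ⟨((FKconst : ℝ))⁻¹ ^ 2, by positivity, ?_⟩
  intro Ω hΩo hΩb u hu h2u hsupp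
  set μΩ := volume.restrict Ω with hμΩ
  have hcu : Continuous u := hu.continuous
  have hcdu : Continuous (fderiv ℝ u) := hu.continuous_fderiv (by simp)
  set Lu := ∫⁻ x, (‖u x‖₊ : ℝ≥0∞) ^ 2 ∂μΩ with hLu
  set Ld := ∫⁻ x, (‖fderiv ℝ u x‖₊ : ℝ≥0∞) ^ 2 ∂μΩ with hLd
  have hIu : ∫ x in Ω, (u x) ^ 2 = Lu.toReal := by
    have h := FK_integral_sq_eq (μ := μΩ) hcu.aestronglyMeasurable.restrict
    simp only [Real.norm_eq_abs, sq_abs] at h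
    exact h
  have hId : ∫ x in Ω, ‖fderiv ℝ u x‖ ^ 2 = Ld.toReal :=
    FK_integral_sq_eq hcdu.aestronglyMeasurable.restrict
  rw [hIu, hId]
  have hLuf : Lu ≠ ⊤ := by
    rw [hLu, ← FK_sq_eLpNorm_two]
    exact ENNReal.pow_ne_top ((eLpNorm_mono_measure u Measure.restrict_le_self).trans_lt
      (hcu.memLp_of_hasCompactSupport h2u).eLpNorm_lt_top).ne
  have hLdf : Ld ≠ ⊤ := by
    rw [hLd, ← FK_sq_eLpNorm_two]
    exact ENNReal.pow_ne_top ((eLpNorm_mono_measure (fderiv ℝ u) Measure.restrict_le_self).trans_lt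
      (hcdu.memLp_of_hasCompactSupport (h2u.fderiv (𝕜 := ℝ))).eLpNorm_lt_top).ne
  have hV : volume Ω ≠ ⊤ := hΩb.measure_lt_top.ne
  have key := FK_key_chain Ω u hu h2u hsupp
  have key2 : Lu ≤ (FKconst : ℝ≥0∞) ^ 2 * Ld * volume Ω := by
    rw [hLu, hLd, ← FK_sq_eLpNorm_two, ← FK_sq_eLpNorm_two]
    calc (eLpNorm u 2 μΩ) ^ 2
        ≤ ((FKconst : ℝ≥0∞) * eLpNorm (fderiv ℝ u) 2 μΩ * (volume Ω) ^ ((1:ℝ)/2)) ^ 2 := by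
          gcongr
      _ = (FKconst : ℝ≥0∞) ^ 2 * (eLpNorm (fderiv ℝ u) 2 μΩ) ^ 2 * volume Ω := by
          rw [mul_pow, mul_pow, ← ENNReal.rpow_natCast ((volume Ω) ^ ((1:ℝ)/2)) 2,
            ← ENNReal.rpow_mul]
          norm_num
  rcases eq_or_ne (volume Ω) 0 with h0 | h0
  · have hμ0 : μΩ = 0 := by rw [hμΩ, Measure.restrict_eq_zero]; exact h0
    have : Lu = 0 := by rw [hLu, hμ0]; simp
    rw [this]
    simp only [ENNReal.toReal_zero, mul_zero]
    exact ENNReal.toReal_nonneg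
  · have hVpos : 0 < (volume Ω).toReal := ENNReal.toReal_pos h0 hV
    have hle : Lu.toReal ≤ (FKconst : ℝ) ^ 2 * Ld.toReal * (volume Ω).toReal := by
      have h := ENNReal.toReal_mono (ENNReal.mul_ne_top (ENNReal.mul_ne_top (ENNReal.pow_ne_top ENNReal.coe_ne_top) hLdf) hV) key2
      rwa [ENNReal.toReal_mul, ENNReal.toReal_mul, ENNReal.toReal_pow,
        ENNReal.coe_toReal] at h
    rw [div_mul_eq_mul_div, div_le_iff₀ hVpos]
    calc ((FKconst : ℝ))⁻¹ ^ 2 * Lu.toReal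
        ≤ ((FKconst : ℝ))⁻¹ ^ 2 * ((FKconst : ℝ) ^ 2 * Ld.toReal * (volume Ω).toReal) := by
          have : (0:ℝ) ≤ ((FKconst : ℝ))⁻¹ ^ 2 := by positivity
          exact mul_le_mul_of_nonneg_left hle this
      _ = Ld.toReal * (volume Ω).toReal := by
          field_simp
end
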